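/- Let E be a trace-preserving completely positive map on a finite-dimensional Hilbert space. If ρ and σ are fixed point states of E (i.e., nonzero positive operators with E(ρ)=ρ, E(σ)=σ) and supp(σ) is a proper subspace of supp(ρ), then there exists a fixed point state η with supp(η) ⊥ supp(σ) and supp(ρ) = supp(η) ⊕ supp(σ). -/

import Mathlib

/-!
The support of a fixed state is invariant under every Kraus operator `E i`: if `ρ y = 0`, then
`0 = ⟪y, E(ρ) y⟫ = ∑ ⟪E_i† y, ρ E_i† y⟫` forces `ρ E_i† y = 0`.

Let `P` project onto `S = supp σ` and put `F = ∑ E_i† P E_i`. Invariance of `S` and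
`∑ E_i† E_i = 1` give `F P = P`, so `F - P = (1 - P) F (1 - P) ≥ 0`, while
`Tr ((F - P) ρ) = Tr (P E(ρ)) - Tr (P ρ) = 0`. Hence `F = P` on `supp ρ`, and for `v` in
`T = S⊥ ⊓ supp ρ` this reads `∑ ‖P E_i v‖² = ⟪v, F v⟫ = 0`: `T` is invariant as well. Since
`supp ρ = S ⊕ T`, the projection `Q` onto `T` commutes with every `E i` on `supp ρ`, so
`η = Q ρ Q` is a fixed state, and its support is `T`.
-/

open Matrix Filter Topology
open scoped ComplexOrder

/-- The matrix of the orthogonal projection onto a subspace `X`. -/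
noncomputable def projMat {d : ℕ} (X : Submodule ℂ (EuclideanSpace ℂ (Fin d))) :
    Matrix (Fin d) (Fin d) ℂ :=
  Matrix.toEuclideanLin.symm ((X.subtypeL.comp X.orthogonalProjection).toLinearMap)

/-- The support of an operator: the range of the associated linear map. -/
noncomputable def matSupp {d : ℕ} (A : Matrix (Fin d) (Fin d) ℂ) :
    Submodule ℂ (EuclideanSpace ℂ (Fin d)) :=
  LinearMap.range (Matrix.toEuclideanLin A)

/-- The outer product `|v⟩⟨v|`. -/
noncomputable def outer {d : ℕ} (v : EuclideanSpace ℂ (Fin d)) : Matrix (Fin d) (Fin d) ℂ :=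
  fun i j => v i * star (v j)

/-- The completely positive map `A ↦ ∑ i, E i * A * (E i)†` given by Kraus operators `E`. -/
noncomputable def krausMap {d m : ℕ} (E : Fin m → Matrix (Fin d) (Fin d) ℂ)
    (A : Matrix (Fin d) (Fin d) ℂ) : Matrix (Fin d) (Fin d) ℂ :=
  ∑ i, E i * A * (E i)ᴴ

namespace Matrix

variable {𝕜 n : Type*} [RCLike 𝕜] [Fintype n]

theorem star_dotProduct_mul_mul_conjTranspose_mulVec (A B : Matrix n n 𝕜) (x : n → 𝕜) :
    star x ⬝ᵥ (B * A * Bᴴ) *ᵥ x = star (Bᴴ *ᵥ x) ⬝ᵥ A *ᵥ (Bᴴ *ᵥ x) := by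
  rw [star_mulVec, conjTranspose_conjTranspose, ← dotProduct_mulVec, mulVec_mulVec,
    mulVec_mulVec]

namespace PosSemidef

theorem mulVec_eq_zero_of_sum_conj {ι : Type*} {s : Finset ι} {A : Matrix n n 𝕜}
    (hA : A.PosSemidef) (B : ι → Matrix n n 𝕜) {x : n → 𝕜}
    (hx : star x ⬝ᵥ (∑ i ∈ s, B i * A * (B i)ᴴ) *ᵥ x = 0) {i : ι} (hi : i ∈ s) :
    A *ᵥ ((B i)ᴴ *ᵥ x) = 0 := by
  simp only [sum_mulVec, dotProduct_sum, star_dotProduct_mul_mul_conjTranspose_mulVec] at hx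
  rw [Finset.sum_eq_zero_iff_of_nonneg fun j _ => hA.dotProduct_mulVec_nonneg _] at hx
  exact (hA.dotProduct_mulVec_zero_iff _).1 (hx i hi)

open scoped MatrixOrder in
theorem mul_eq_zero_of_trace_mul_eq_zero {A B : Matrix n n 𝕜} (hA : A.PosSemidef)
    (hB : B.PosSemidef) (h : (A * B).trace = 0) : A * B = 0 := by
  classical
  obtain ⟨a, rfl⟩ := CStarAlgebra.nonneg_iff_eq_star_mul_self.mp hA.nonneg
  obtain ⟨b, rfl⟩ := CStarAlgebra.nonneg_iff_eq_star_mul_self.mp hB.nonneg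
  simp only [star_eq_conjTranspose] at h ⊢
  have hba : b * aᴴ = 0 := by
    rw [← trace_mul_conjTranspose_self_eq_zero_iff, conjTranspose_mul, conjTranspose_conjTranspose,
      ← h, ← Matrix.mul_assoc (aᴴ * a) bᴴ b, trace_mul_comm _ b]
    simp only [Matrix.mul_assoc]
  calc aᴴ * a * (bᴴ * b) = aᴴ * (b * aᴴ)ᴴ * b := by
        simp only [conjTranspose_mul, conjTranspose_conjTranspose, Matrix.mul_assoc]
    _ = 0 := by rw [hba, conjTranspose_zero, Matrix.mul_zero, Matrix.zero_mul]

end PosSemidef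

end Matrix

open Module.End

section Support

variable {d : ℕ}

theorem matSupp_zero : matSupp (0 : Matrix (Fin d) (Fin d) ℂ) = ⊥ := by
  simp [matSupp]

theorem matSupp_mul_le (A B : Matrix (Fin d) (Fin d) ℂ) : matSupp (A * B) ≤ matSupp A := by
  rw [matSupp, toLpLin_mul_same, LinearMap.range_comp]
  exact LinearMap.map_le_range

theorem mem_orthogonal_matSupp_iff {A : Matrix (Fin d) (Fin d) ℂ} {x : EuclideanSpace ℂ (Fin d)} :
    x ∈ (matSupp A)ᗮ ↔ Aᴴ *ᵥ x.ofLp = 0 := by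
  rw [matSupp, LinearMap.orthogonal_range, ← toEuclideanLin_conjTranspose_eq_adjoint,
    LinearMap.mem_ker]
  simp [toLpLin_apply]

theorem Matrix.PosSemidef.mem_orthogonal_matSupp_iff {A : Matrix (Fin d) (Fin d) ℂ}
    (hA : A.PosSemidef) {x : EuclideanSpace ℂ (Fin d)} :
    x ∈ (matSupp A)ᗮ ↔ A *ᵥ x.ofLp = 0 := by
  rw [_root_.mem_orthogonal_matSupp_iff, hA.isHermitian.eq]

variable (X : Submodule ℂ (EuclideanSpace ℂ (Fin d)))

theorem toEuclideanLin_projMat : toEuclideanLin (projMat X) = X.starProjection := by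
  simp [projMat, Submodule.starProjection]

theorem projMat_isHermitian : (projMat X).IsHermitian := by
  rw [← isSymmetric_toEuclideanLin_iff, toEuclideanLin_projMat]
  exact X.starProjection_isSymmetric

theorem projMat_mul_self : projMat X * projMat X = projMat X := by
  apply toEuclideanLin.injective
  rw [toLpLin_mul_same, toEuclideanLin_projMat]
  exact congrArg ContinuousLinearMap.toLinearMap X.isIdempotentElem_starProjection

theorem projMat_posSemidef : (projMat X).PosSemidef := by
  rw [← isPositive_toEuclideanLin_iff, toEuclideanLin_projMat]
  exact X.isSymmetricProjection_starProjection.isPositive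

theorem matSupp_projMat : matSupp (projMat X) = X := by
  rw [matSupp, toEuclideanLin_projMat]
  exact X.range_starProjection

theorem projMat_mulVec (x : EuclideanSpace ℂ (Fin d)) :
    projMat X *ᵥ x.ofLp = (X.starProjection x).ofLp :=
  congrArg WithLp.ofLp (LinearMap.congr_fun (toEuclideanLin_projMat X) x)

variable {X}

theorem projMat_mulVec_eq_zero_iff {x : EuclideanSpace ℂ (Fin d)} :
    projMat X *ᵥ x.ofLp = 0 ↔ x ∈ Xᗮ := by
  rw [projMat_mulVec, WithLp.ofLp_eq_zero, X.starProjection_apply_eq_zero_iff]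

theorem projMat_mul_mul_projMat_of_mem_invtSubmodule {M : Matrix (Fin d) (Fin d) ℂ}
    (hM : X ∈ invtSubmodule (toEuclideanLin M)) :
    projMat X * M * projMat X = M * projMat X := by
  apply toEuclideanLin.injective
  ext1 x
  have := hM (X.starProjection_apply_mem x)
  simp [toLpLin_mul_same, toEuclideanLin_projMat, X.starProjection_eq_self_iff.2 this]

end Support

section Kraus

variable {d m : ℕ} (E : Fin m → Matrix (Fin d) (Fin d) ℂ)

theorem posSemidef_krausMap {A : Matrix (Fin d) (Fin d) ℂ} (hA : A.PosSemidef) :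
    (krausMap E A).PosSemidef :=
  posSemidef_sum _ fun i _ => hA.mul_mul_conjTranspose_same (E i)

theorem trace_krausMap_conjTranspose_mul (A B : Matrix (Fin d) (Fin d) ℂ) :
    (krausMap (fun i => (E i)ᴴ) B * A).trace = (B * krausMap E A).trace := by
  simp only [krausMap, Finset.sum_mul, Finset.mul_sum, trace_sum, conjTranspose_conjTranspose]
  refine Finset.sum_congr rfl fun i _ => ?_
  rw [Matrix.mul_assoc, Matrix.mul_assoc, trace_mul_comm]
  simp only [Matrix.mul_assoc]

theorem matSupp_mem_invtSubmodule_of_krausMap_eq {A : Matrix (Fin d) (Fin d) ℂ}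
    (hA : A.PosSemidef) (hfix : krausMap E A = A) (i : Fin m) :
    matSupp A ∈ invtSubmodule (toEuclideanLin (E i)) := by
  rw [← Submodule.orthogonal_orthogonal (matSupp A), ← mem_invtSubmodule_adjoint_iff,
    ← toEuclideanLin_conjTranspose_eq_adjoint]
  intro y hy
  rw [Submodule.mem_comap, hA.mem_orthogonal_matSupp_iff]
  rw [hA.mem_orthogonal_matSupp_iff] at hy
  have h0 : star y.ofLp ⬝ᵥ krausMap E A *ᵥ y.ofLp = 0 := by rw [hfix, hy, dotProduct_zero]
  simpa [toLpLin_apply] using hA.mulVec_eq_zero_of_sum_conj E h0 (Finset.mem_univ i)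

end Kraus

section Complement

variable {d m : ℕ} {E : Fin m → Matrix (Fin d) (Fin d) ℂ}
  {S : Submodule ℂ (EuclideanSpace ℂ (Fin d))}

theorem krausMap_conjTranspose_projMat_mul_projMat (hE : ∑ i, (E i)ᴴ * E i = 1)
    (hS : ∀ i, S ∈ invtSubmodule (toEuclideanLin (E i))) :
    krausMap (fun i => (E i)ᴴ) (projMat S) * projMat S = projMat S := by
  calc krausMap (fun i => (E i)ᴴ) (projMat S) * projMat S
      = ∑ i, (E i)ᴴ * (projMat S * E i * projMat S) := by
        simp only [krausMap, conjTranspose_conjTranspose, Finset.sum_mul, Matrix.mul_assoc]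
    _ = (∑ i, (E i)ᴴ * E i) * projMat S := by
        simp only [projMat_mul_mul_projMat_of_mem_invtSubmodule (hS _), Finset.sum_mul,
          Matrix.mul_assoc]
    _ = projMat S := by rw [hE, Matrix.one_mul]

theorem posSemidef_krausMap_conjTranspose_projMat_sub (hE : ∑ i, (E i)ᴴ * E i = 1)
    (hS : ∀ i, S ∈ invtSubmodule (toEuclideanLin (E i))) :
    (krausMap (fun i => (E i)ᴴ) (projMat S) - projMat S).PosSemidef := by
  set F := krausMap (fun i => (E i)ᴴ) (projMat S)
  set P := projMat S
  have hF : F.PosSemidef := posSemidef_krausMap _ (projMat_posSemidef S)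
  have hFP : F * P = P := krausMap_conjTranspose_projMat_mul_projMat hE hS
  have hPH : Pᴴ = P := (projMat_isHermitian S).eq
  have hPF : P * F = P := by
    simpa only [conjTranspose_mul, hF.isHermitian.eq, hPH] using congrArg conjTranspose hFP
  have hPP : P * P = P := projMat_mul_self S
  have : F - P = (1 - P) * F * (1 - P)ᴴ := by
    rw [conjTranspose_sub, conjTranspose_one, hPH]
    calc F - P = F - P * F - F * P + P * F * P := by rw [hPF, hFP, hPP]; abel
      _ = (1 - P) * F * (1 - P) := by noncomm_ring
  rw [this]
  exact hF.mul_mul_conjTranspose_same _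

theorem krausMap_conjTranspose_projMat_sub_mul_eq_zero (hE : ∑ i, (E i)ᴴ * E i = 1)
    (hS : ∀ i, S ∈ invtSubmodule (toEuclideanLin (E i)))
    {ρ : Matrix (Fin d) (Fin d) ℂ} (hρ : ρ.PosSemidef) (hρfix : krausMap E ρ = ρ) :
    (krausMap (fun i => (E i)ᴴ) (projMat S) - projMat S) * ρ = 0 :=
  (posSemidef_krausMap_conjTranspose_projMat_sub hE hS).mul_eq_zero_of_trace_mul_eq_zero hρ <| by
    rw [Matrix.sub_mul, trace_sub, trace_krausMap_conjTranspose_mul, hρfix, sub_self]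

theorem orthogonal_inf_matSupp_mem_invtSubmodule (hE : ∑ i, (E i)ᴴ * E i = 1)
    (hS : ∀ i, S ∈ invtSubmodule (toEuclideanLin (E i)))
    {ρ : Matrix (Fin d) (Fin d) ℂ} (hρ : ρ.PosSemidef) (hρfix : krausMap E ρ = ρ) (i : Fin m) :
    Sᗮ ⊓ matSupp ρ ∈ invtSubmodule (toEuclideanLin (E i)) := by
  rintro v ⟨hvS, hvρ⟩
  refine ⟨?_, matSupp_mem_invtSubmodule_of_krausMap_eq E hρ hρfix i hvρ⟩
  have hFv : krausMap (fun i => (E i)ᴴ) (projMat S) *ᵥ v.ofLp = 0 := by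
    obtain ⟨y, rfl⟩ := hvρ
    have := congrArg (· *ᵥ y.ofLp) (krausMap_conjTranspose_projMat_sub_mul_eq_zero hE hS hρ hρfix)
    simp only [← mulVec_mulVec, sub_mulVec, zero_mulVec, sub_eq_zero] at this
    simpa [this, toLpLin_apply] using projMat_mulVec_eq_zero_iff.2 hvS
  have h0 : star v.ofLp ⬝ᵥ krausMap (fun i => (E i)ᴴ) (projMat S) *ᵥ v.ofLp = 0 := by
    rw [hFv, dotProduct_zero]
  rw [SetLike.mem_coe, ← projMat_mulVec_eq_zero_iff]
  simpa [toLpLin_apply] using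
    (projMat_posSemidef S).mulVec_eq_zero_of_sum_conj _ h0 (Finset.mem_univ i)

end Complement

section Conjugation

variable {d m : ℕ}

theorem mul_projMat_mul_eq_projMat_mul_mul {M ρ : Matrix (Fin d) (Fin d) ℂ}
    {S T : Submodule ℂ (EuclideanSpace ℂ (Fin d))} (hST : S ≤ Tᗮ)
    (hS : S ∈ invtSubmodule (toEuclideanLin M)) (hT : T ∈ invtSubmodule (toEuclideanLin M))
    (hρ : matSupp ρ ≤ S ⊔ T) :
    M * projMat T * ρ = projMat T * M * ρ := by
  apply toEuclideanLin.injective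
  ext1 x
  obtain ⟨s, hs, t, ht, hst⟩ := Submodule.mem_sup.1 (hρ ⟨x, rfl⟩)
  have hPs : T.starProjection s = 0 := T.starProjection_apply_eq_zero_iff.2 (hST hs)
  have hPMs : T.starProjection (toEuclideanLin M s) = 0 :=
    T.starProjection_apply_eq_zero_iff.2 (hST (hS hs))
  simp only [toLpLin_mul_same, toEuclideanLin_projMat, LinearMap.comp_apply, ← hst, map_add,
    ContinuousLinearMap.coe_coe, hPs, hPMs, T.starProjection_eq_self_iff.2 ht,
    T.starProjection_eq_self_iff.2 (hT ht), map_zero]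

theorem krausMap_mul_mul_of_mul_mul_eq {E : Fin m → Matrix (Fin d) (Fin d) ℂ}
    {Q ρ : Matrix (Fin d) (Fin d) ℂ} (hQ : Q.IsHermitian) (hρ : ρ.IsHermitian)
    (h : ∀ i, E i * Q * ρ = Q * E i * ρ) :
    krausMap E (Q * ρ * Q) = Q * krausMap E ρ * Q := by
  have h' : ∀ i, ρ * Q * (E i)ᴴ = ρ * (E i)ᴴ * Q := fun i => by
    simpa only [conjTranspose_mul, hQ.eq, hρ.eq, Matrix.mul_assoc] using
      congrArg conjTranspose (h i)
  simp only [krausMap, Finset.mul_sum, Finset.sum_mul]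
  refine Finset.sum_congr rfl fun i _ => ?_
  calc E i * (Q * ρ * Q) * (E i)ᴴ = E i * Q * ρ * (Q * (E i)ᴴ) := by
        simp only [Matrix.mul_assoc]
    _ = Q * E i * (ρ * Q * (E i)ᴴ) := by rw [h i]; simp only [Matrix.mul_assoc]
    _ = Q * (E i * ρ * (E i)ᴴ) * Q := by rw [h' i]; simp only [Matrix.mul_assoc]

theorem Matrix.PosSemidef.projMat_mul_mul_projMat {ρ : Matrix (Fin d) (Fin d) ℂ}
    (hρ : ρ.PosSemidef) (T : Submodule ℂ (EuclideanSpace ℂ (Fin d))) :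
    (projMat T * ρ * projMat T).PosSemidef := by
  simpa only [(projMat_isHermitian T).eq] using hρ.mul_mul_conjTranspose_same (projMat T)

theorem matSupp_projMat_mul_mul_projMat {ρ : Matrix (Fin d) (Fin d) ℂ} (hρ : ρ.PosSemidef)
    {T : Submodule ℂ (EuclideanSpace ℂ (Fin d))} (hT : T ≤ matSupp ρ) :
    matSupp (projMat T * ρ * projMat T) = T := by
  refine le_antisymm (((matSupp_mul_le _ _).trans (matSupp_mul_le _ _)).trans
    (matSupp_projMat T).le) ?_
  rw [← Submodule.orthogonal_le_orthogonal_iff]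
  intro x hx
  rw [(hρ.projMat_mul_mul_projMat T).mem_orthogonal_matSupp_iff] at hx
  have hρPx : ρ *ᵥ (T.starProjection x).ofLp = 0 := by
    rw [← projMat_mulVec, ← hρ.dotProduct_mulVec_zero_iff]
    simpa only [(projMat_isHermitian T).eq, hx, dotProduct_zero] using
      (star_dotProduct_mul_mul_conjTranspose_mulVec ρ (projMat T) x.ofLp).symm
  have hPx : T.starProjection x ∈ matSupp ρ ⊓ (matSupp ρ)ᗮ :=
    ⟨hT (T.starProjection_apply_mem x), hρ.mem_orthogonal_matSupp_iff.2 hρPx⟩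
  rw [Submodule.inf_orthogonal_eq_bot, Submodule.mem_bot,
    T.starProjection_apply_eq_zero_iff] at hPx
  exact hPx

end Conjugation

theorem stmt4_general {d m : ℕ} (E : Fin m → Matrix (Fin d) (Fin d) ℂ)
    (hE : ∑ i, (E i)ᴴ * E i = 1)
    (ρ σ : Matrix (Fin d) (Fin d) ℂ)
    (hρ : ρ.PosSemidef) (hρfix : krausMap E ρ = ρ)
    (hσ : σ.PosSemidef) (hσfix : krausMap E σ = σ)
    (hlt : matSupp σ < matSupp ρ) :
    ∃ η : Matrix (Fin d) (Fin d) ℂ, η.PosSemidef ∧ η ≠ 0 ∧ krausMap E η = η ∧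
      (∀ x ∈ matSupp η, ∀ y ∈ matSupp σ, inner ℂ x y = (0 : ℂ)) ∧
      matSupp ρ = matSupp η ⊔ matSupp σ := by
  set T := (matSupp σ)ᗮ ⊓ matSupp ρ
  set Q := projMat T
  have hsup : matSupp σ ⊔ T = matSupp ρ :=
    Submodule.sup_orthogonal_inf_of_hasOrthogonalProjection hlt.le
  have hσinv := matSupp_mem_invtSubmodule_of_krausMap_eq E hσ hσfix
  have hTinv := orthogonal_inf_matSupp_mem_invtSubmodule hE hσinv hρ hρfix
  have hη : matSupp (Q * ρ * Q) = T := matSupp_projMat_mul_mul_projMat hρ inf_le_right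
  refine ⟨Q * ρ * Q, ?_, ?_, ?_, ?_, by rw [hη, sup_comm, hsup]⟩
  · exact hρ.projMat_mul_mul_projMat T
  · intro h
    rw [h, matSupp_zero] at hη
    exact hlt.ne (by rw [← hsup, ← hη, sup_bot_eq])
  · rw [krausMap_mul_mul_of_mul_mul_eq (projMat_isHermitian T) hρ.isHermitian, hρfix]
    exact fun i => mul_projMat_mul_eq_projMat_mul_mul
      (Submodule.le_orthogonal_iff_le_orthogonal.2 inf_le_left)
      (hσinv i) (hTinv i) hsup.ge
  · intro x hx y hy
    rw [hη] at hx
    exact inner_eq_zero_symm.1 (hx.1 y hy)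

/-- If `σ` and `ρ` are fixed point states with `supp σ` properly contained in `supp ρ`,
there is a fixed point state `η` with `supp η ⊥ supp σ` and `supp ρ = supp η ⊕ supp σ`. -/
theorem stmt4 {d m : ℕ} (E : Fin m → Matrix (Fin d) (Fin d) ℂ)
    (hE : ∑ i, (E i)ᴴ * E i = 1)
    (ρ σ : Matrix (Fin d) (Fin d) ℂ)
    (hρ : ρ.PosSemidef) (hρ0 : ρ ≠ 0) (hρfix : krausMap E ρ = ρ)
    (hσ : σ.PosSemidef) (hσ0 : σ ≠ 0) (hσfix : krausMap E σ = σ)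
    (hlt : matSupp σ < matSupp ρ) :
    ∃ η : Matrix (Fin d) (Fin d) ℂ, η.PosSemidef ∧ η ≠ 0 ∧ krausMap E η = η ∧
      (∀ x ∈ matSupp η, ∀ y ∈ matSupp σ, inner ℂ x y = (0 : ℂ)) ∧
      matSupp ρ = matSupp η ⊔ matSupp σ :=
  stmt4_general E hE ρ σ hρ hρfix hσ hσfix hlt
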